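/- arXiv:2412.20248 — 4 statements merged into one kernel-verified Lean document; each statement's English description precedes it below -/
import Mathlib

section
/- Let d = 2 and 0 < ε ≤ 1/11. Then sup_{r ≥ s ≥ (1−ε)/2} ∫_{1−ε}^{1+ε} K_{r,s}(t) dt ≤ (22√2/(5π)) · √ε. -/
open MeasureTheory Metric Filter Set
open scoped ENNReal NNReal Topology

noncomputable section

/-- `|S^k|`: the surface (k-dimensional Hausdorff) measure of the unit sphere
`S^k ⊂ ℝ^(k+1)`. -/
def sphereArea (k : ℕ) : ℝ :=
  (μH[(k : ℝ)] (Metric.sphere (0 : EuclideanSpace ℝ (Fin (k+1))) 1)).toReal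

/-- The kernel `K_{r,s}(t)`. -/
def Krs (d : ℕ) (r s t : ℝ) : ℝ :=
  (sphereArea (d-2) / sphereArea (d-1)) *
    ((1 - ((r^2 + s^2 - t^2) / (2*r*s))^2) ^ (((d : ℝ) - 3)/2)) * (t/(r*s)) *
    Set.indicator (Set.Ioo (r-s) (r+s)) 1 t

/-- `sup_{r ≥ s ≥ (1-ε)/2} ∫_{1-ε}^{1+ε} K_{r,s}(t) dt`. -/
def Ksup (d : ℕ) (ε : ℝ) : ℝ :=
  sSup {v : ℝ | ∃ r s : ℝ, s ≤ r ∧ (1-ε)/2 ≤ s ∧ v = ∫ t in (1-ε)..(1+ε), Krs d r s t}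


/-!
On `(r - s, r + s)` the kernel for `d = 2` is `t ↦ -(d/dt) arcsin (c t) / π` with
`c t = (r² + s² - t²) / (2 r s)`, and for `t > 0` outside that interval both the kernel and the
derivative of `arcsin ∘ c` vanish. Hence the integral over `[1 - ε, 1 + ε]` is
`(arcsin c(1 - ε) - arcsin c(1 + ε)) / π`. Now `arcsin v - arcsin u ≤ 2 √(v - u)` whenever
`0 ≤ v - u ≤ 1`, and `c(1 - ε) - c(1 + ε) = 2ε / (r s) ≤ 242 ε / 25` once
`r ≥ s ≥ (1 - ε) / 2 ≥ 5 / 11`.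

The constant `|S⁰| / |S¹| = 2 / (2π)` requires the `1`-dimensional Hausdorff measure of the unit
circle. It is at most `2π` because the circle is a `1`-Lipschitz image of an interval of length
`2π`. It is at least `n · 2 sin (π / n)` for every `n`, because `n` disjoint arcs each project
`1`-Lipschitzly onto a segment as long as their chord.
-/

open Real

lemma LinearIsometryEquiv.hausdorffMeasure_sphere_zero {E F : Type*} [NormedAddCommGroup E]
    [NormedSpace ℝ E] [MeasurableSpace E] [BorelSpace E] [NormedAddCommGroup F] [NormedSpace ℝ F]
    [MeasurableSpace F] [BorelSpace F] (e : E ≃ₗᵢ[ℝ] F) (d r : ℝ) :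
    μH[d] (sphere (0 : F) r) = μH[d] (sphere (0 : E) r) := by
  rw [← e.map_zero, ← e.image_sphere, e.isometry.hausdorffMeasure_image (Or.inr e.surjective)]

lemma sphereArea_zero : sphereArea 0 = 2 := by
  rw [sphereArea, (OrthonormalBasis.singleton (Fin 1) ℝ).repr.hausdorffMeasure_sphere_zero,
    Real.sphere_eq_pair _ zero_le_one, Nat.cast_zero, insert_eq,
    measure_union (by norm_num) (measurableSet_singleton _),
    Measure.hausdorffMeasure_zero_singleton, Measure.hausdorffMeasure_zero_singleton]
  norm_num

namespace Circle

lemma dist_coe_exp_le (θ φ : ℝ) : dist (exp θ : ℂ) (exp φ) ≤ dist θ φ := by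
  have : (exp θ : ℂ) - exp φ = exp φ * (exp (θ - φ) - 1) := by
    rw [mul_sub, mul_one, ← coe_mul, ← exp_add, add_sub_cancel]
  rw [dist_eq_norm, this, norm_mul, norm_coe, one_mul, coe_exp, mul_comm, Real.dist_eq,
    ← Real.norm_eq_abs]
  exact Real.norm_exp_I_mul_ofReal_sub_one_le

lemma lipschitzWith_coe_exp : LipschitzWith 1 (fun θ : ℝ => (exp θ : ℂ)) :=
  LipschitzWith.mk_one dist_coe_exp_le

lemma image_coe_exp_Ioc : (fun θ : ℝ => (exp θ : ℂ)) '' Ioc (-π) π = sphere 0 1 := by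
  ext z
  constructor
  · rintro ⟨θ, -, rfl⟩
    exact mem_sphere_zero_iff_norm.2 (norm_coe _)
  · intro hz
    refine ⟨z.arg, ⟨Complex.neg_pi_lt_arg z, Complex.arg_le_pi z⟩, ?_⟩
    simpa [mem_sphere_zero_iff_norm.1 hz] using Complex.norm_mul_exp_arg_mul_I z

lemma ofReal_two_sin_le_hausdorffMeasure_image_coe_exp {a b : ℝ} (hab : a ≤ b) :
    ENNReal.ofReal (2 * sin ((b - a) / 2)) ≤ μH[1] ((fun θ : ℝ => (exp θ : ℂ)) '' Ioo a b) := by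
  -- project the arc onto the line through `0` orthogonal to its midpoint
  set c := (a + b) / 2
  set p : ℂ → ℝ := fun z => ((exp (-c) : ℂ) * z).im
  have hp : LipschitzWith 1 p := LipschitzWith.mk_one fun z w => by
    rw [Real.dist_eq, Complex.dist_eq, ← Complex.sub_im, ← mul_sub]
    refine (Complex.abs_im_le_norm _).trans ?_
    rw [norm_mul, norm_coe, one_mul]
  have hpexp : ∀ θ, p (exp θ) = sin (θ - c) := fun θ => by
    simp only [p]
    rw [← coe_mul, ← exp_add, coe_exp, Complex.exp_ofReal_mul_I_im, neg_add_eq_sub]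
  have hsub : Ioo (-sin ((b - a) / 2)) (sin ((b - a) / 2)) ⊆
      p '' ((fun θ : ℝ => (exp θ : ℂ)) '' Ioo a b) := by
    rw [image_image]
    simp_rw [hpexp]
    have := intermediate_value_Ioo hab (continuous_sin.comp (continuous_sub_right c)).continuousOn
    rwa [Function.comp_apply, Function.comp_apply, show a - c = -((b - a) / 2) by ring,
      show b - c = (b - a) / 2 by ring, sin_neg] at this
  calc ENNReal.ofReal (2 * sin ((b - a) / 2))
      = μH[1] (Ioo (-sin ((b - a) / 2)) (sin ((b - a) / 2))) := by
        rw [hausdorffMeasure_real, Real.volume_Ioo]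
        ring_nf
    _ ≤ μH[1] (p '' ((fun θ : ℝ => (exp θ : ℂ)) '' Ioo a b)) := measure_mono hsub
    _ ≤ μH[1] ((fun θ : ℝ => (exp θ : ℂ)) '' Ioo a b) := by
        simpa only [ENNReal.coe_one, ENNReal.one_rpow, one_mul] using
          hp.hausdorffMeasure_image_le zero_le_one _

lemma hausdorffMeasure_sphere_le : μH[1] (sphere (0 : ℂ) 1) ≤ ENNReal.ofReal (2 * π) := by
  rw [← image_coe_exp_Ioc]
  calc μH[1] ((fun θ : ℝ => (exp θ : ℂ)) '' Ioc (-π) π) ≤ μH[1] (Ioc (-π) π) := by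
        simpa only [ENNReal.coe_one, ENNReal.one_rpow, one_mul] using
          lipschitzWith_coe_exp.hausdorffMeasure_image_le zero_le_one _
    _ = ENNReal.ofReal (2 * π) := by
        rw [hausdorffMeasure_real, Real.volume_Ioc]
        ring_nf

lemma ofReal_nat_mul_two_sin_le_hausdorffMeasure_sphere (n : ℕ) :
    ENNReal.ofReal (n * (2 * sin (π / n))) ≤ μH[1] (sphere (0 : ℂ) 1) := by
  -- `n` disjoint arcs of angle `2π / n`, each at least as long as its chord
  set e : ℝ → ℂ := fun θ => (exp θ : ℂ)
  set f : ℕ → ℝ := fun k => k * (2 * π / n)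
  have hf : Monotone f := fun k l hkl => by
    simp only [f]
    gcongr
  have hinj : InjOn e (Ioc 0 (2 * π)) :=
    Subtype.val_injective.comp_injOn (exp_injOn_Ioc (by simp))
  have harc : ∀ k ∈ Finset.range n, Ioo (f k) (f (k + 1)) ⊆ Ioc 0 (2 * π) := by
    intro k hk θ hθ
    have hkn : (k : ℝ) + 1 ≤ n := by exact_mod_cast Finset.mem_range.1 hk
    have hn : (0 : ℝ) < n := by linarith [(k.cast_nonneg : (0 : ℝ) ≤ k)]
    refine ⟨lt_of_le_of_lt (by positivity) hθ.1, hθ.2.le.trans ?_⟩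
    calc f (k + 1) = (k + 1) * (2 * π / n) := by simp [f]
      _ ≤ n * (2 * π / n) := by gcongr
      _ = 2 * π := by field_simp
  calc ENNReal.ofReal (n * (2 * sin (π / n)))
      = ∑ k ∈ Finset.range n, ENNReal.ofReal (2 * sin ((f (k + 1) - f k) / 2)) := by
        have hstep : ∀ k : ℕ, (f (k + 1) - f k) / 2 = π / n := fun k => by
          simp only [f]
          push_cast
          ring
        simp_rw [hstep]
        rw [Finset.sum_const, Finset.card_range, nsmul_eq_mul, ← ENNReal.ofReal_natCast,
          ← ENNReal.ofReal_mul n.cast_nonneg]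
    _ ≤ ∑ k ∈ Finset.range n, μH[1] (e '' Ioo (f k) (f (k + 1))) :=
        Finset.sum_le_sum fun k _ =>
          ofReal_two_sin_le_hausdorffMeasure_image_coe_exp (hf k.le_succ)
    _ = μH[1] (⋃ k ∈ Finset.range n, e '' Ioo (f k) (f (k + 1))) := by
        refine (measure_biUnion_finset (fun k hk l hl hkl => ?_) fun k hk => ?_).symm
        · exact (hf.pairwise_disjoint_on_Ioo_succ hkl).image hinj (harc k hk) (harc l hl)
        · exact measurableSet_Ioo.image_of_continuousOn_injOn
            lipschitzWith_coe_exp.continuous.continuousOn (hinj.mono (harc k hk))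
    _ ≤ μH[1] (sphere (0 : ℂ) 1) := measure_mono <| iUnion₂_subset fun k _ =>
        image_subset_iff.2 fun θ _ => mem_sphere_zero_iff_norm.2 (norm_coe _)

lemma hausdorffMeasure_sphere : μH[1] (sphere (0 : ℂ) 1) = ENNReal.ofReal (2 * π) := by
  have hsinc : Tendsto (fun n : ℕ => 2 * π * sinc (π / n)) atTop (𝓝 (2 * π)) := by
    simpa using ((continuous_sinc.tendsto 0).comp
      (tendsto_const_div_atTop_nhds_zero_nat π)).const_mul (2 * π)
  have hpoly : Tendsto (fun n : ℕ => n * (2 * sin (π / n))) atTop (𝓝 (2 * π)) := by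
    refine hsinc.congr' ((eventually_ne_atTop 0).mono fun n hn => ?_)
    rw [sinc_of_ne_zero (by positivity)]
    field_simp
  exact le_antisymm hausdorffMeasure_sphere_le
    (le_of_tendsto' (ENNReal.tendsto_ofReal hpoly)
      ofReal_nat_mul_two_sin_le_hausdorffMeasure_sphere)

end Circle

lemma sphereArea_one : sphereArea 1 = 2 * π := by
  rw [sphereArea, Complex.orthonormalBasisOneI.repr.hausdorffMeasure_sphere_zero, Nat.cast_one,
    Circle.hausdorffMeasure_sphere, ENNReal.toReal_ofReal (by positivity)]

lemma cos_arcsin_sub_arcsin_ge {u v : ℝ} (hu : -1 ≤ u) (huv : u ≤ v) (hv : v ≤ 1) :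
    1 - (v - u) ≤ cos (arcsin v - arcsin u) := by
  have hv2 : 0 ≤ 1 - v ^ 2 := by nlinarith
  have hu2 : 0 ≤ 1 - u ^ 2 := by nlinarith
  rw [cos_sub, cos_arcsin, cos_arcsin, sin_arcsin (hu.trans huv) hv, sin_arcsin hu (huv.trans hv),
    ← sqrt_mul hv2]
  -- `1 - (v - u) - u v = (1 - v)(1 + u)` and `(1 - v²)(1 - u²) = (1 - v)(1 + u) · (1 + v)(1 - u)`
  have : (1 - v) * (1 + u) ≤ √((1 - v ^ 2) * (1 - u ^ 2)) := by
    rw [le_sqrt (by nlinarith) (mul_nonneg hv2 hu2)]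
    nlinarith [mul_nonneg (mul_nonneg (sub_nonneg.2 hv) (neg_le_iff_add_nonneg'.1 hu))
      (sub_nonneg.2 huv)]
  nlinarith

lemma arccos_one_sub_le_two_sqrt {x : ℝ} (hx0 : 0 ≤ x) (hx1 : x ≤ 1) :
    arccos (1 - x) ≤ 2 * √x := by
  set t := √x
  have ht0 : 0 ≤ t := sqrt_nonneg x
  have ht1 : t ≤ 1 := sqrt_le_one.2 hx1
  have hsin : 3 / 4 * t ≤ sin t := by
    rcases ht0.eq_or_lt with h | h
    · simp [← h]
    · nlinarith [sin_gt_sub_cube h, mul_le_mul ht1 ht1 ht0 zero_le_one]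
  have hcos : cos (2 * t) ≤ 1 - x := by
    rw [cos_two_mul, cos_sq', ← sq_sqrt hx0]
    nlinarith
  calc arccos (1 - x) ≤ arccos (cos (2 * t)) := arccos_le_arccos hcos
    _ = 2 * t := arccos_cos (by positivity) (by linarith [pi_gt_three])

lemma arcsin_sub_arcsin_le_arccos {u v : ℝ} (hu : -1 ≤ u) (huv : u ≤ v) (hv : v ≤ 1) :
    arcsin v - arcsin u ≤ arccos (1 - (v - u)) := by
  have hle : arcsin u ≤ arcsin v := arcsin_le_arcsin huv
  calc arcsin v - arcsin u = arccos (cos (arcsin v - arcsin u)) :=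
        (arccos_cos (sub_nonneg.2 hle)
          (by linarith [arcsin_le_pi_div_two v, neg_pi_div_two_le_arcsin u])).symm
    _ ≤ arccos (1 - (v - u)) := arccos_le_arccos (cos_arcsin_sub_arcsin_ge hu huv hv)

lemma arcsin_sub_arcsin_le_two_sqrt {u v : ℝ} (huv : u ≤ v) (h : v - u ≤ 1) :
    arcsin v - arcsin u ≤ 2 * √(v - u) := by
  -- `arcsin` factors through the projection onto `[-1, 1]`, which is monotone and `1`-Lipschitz
  set p := projIcc (-1 : ℝ) 1 (neg_le_self zero_le_one)
  have hp : (p u : ℝ) ≤ p v := monotone_projIcc _ huv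
  have hpuv : (p v : ℝ) - p u ≤ v - u :=
    (le_abs_self _).trans ((abs_projIcc_sub_projIcc _).trans (abs_of_nonneg (sub_nonneg.2 huv)).le)
  rw [← arcsin_projIcc u, ← arcsin_projIcc v]
  calc arcsin (p v) - arcsin (p u) ≤ arccos (1 - (p v - p u)) :=
        arcsin_sub_arcsin_le_arccos (p u).2.1 hp (p v).2.2
    _ ≤ 2 * √(p v - p u) := arccos_one_sub_le_two_sqrt (sub_nonneg.2 hp) (hpuv.trans h)
    _ ≤ 2 * √(v - u) := by gcongr

def cosAngle (r s t : ℝ) : ℝ := (r ^ 2 + s ^ 2 - t ^ 2) / (2 * r * s)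

lemma one_sub_cosAngle_sq {r s : ℝ} (hr : r ≠ 0) (hs : s ≠ 0) (t : ℝ) :
    1 - cosAngle r s t ^ 2 = (t ^ 2 - (r - s) ^ 2) * ((r + s) ^ 2 - t ^ 2) / (2 * r * s) ^ 2 := by
  unfold cosAngle
  field_simp
  ring

lemma cosAngle_sq_lt_one_iff {r s t : ℝ} (hs : 0 < s) (hsr : s ≤ r) (ht : 0 ≤ t) :
    cosAngle r s t ^ 2 < 1 ↔ t ∈ Ioo (r - s) (r + s) := by
  have hr : 0 < r := hs.trans_le hsr
  have hab : (r - s) ^ 2 ≤ (r + s) ^ 2 := pow_le_pow_left₀ (by linarith) (by linarith) 2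
  rw [← sub_pos, one_sub_cosAngle_sq hr.ne' hs.ne', div_pos_iff_of_pos_right (by positivity)]
  constructor
  · intro h
    by_contra hmem
    rw [mem_Ioo, not_and_or, not_lt, not_lt] at hmem
    refine h.not_ge ?_
    rcases hmem with hta | hbt
    · have := pow_le_pow_left₀ ht hta 2
      exact mul_nonpos_of_nonpos_of_nonneg (by linarith) (by linarith)
    · have := pow_le_pow_left₀ (by linarith) hbt 2
      exact mul_nonpos_of_nonneg_of_nonpos (by linarith) (by linarith)
  · rintro ⟨h1, h2⟩
    exact mul_pos (by nlinarith) (by nlinarith)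

lemma cosAngle_sq_ne_one {r s t : ℝ} (hs : 0 < s) (hsr : s ≤ r) (ht : 0 ≤ t)
    (ha : t ≠ r - s) (hb : t ≠ r + s) : cosAngle r s t ^ 2 ≠ 1 := by
  have hr : 0 < r := hs.trans_le hsr
  have hne : 1 - cosAngle r s t ^ 2 ≠ 0 := by
    rw [one_sub_cosAngle_sq hr.ne' hs.ne']
    refine div_ne_zero (mul_ne_zero ?_ ?_) (by positivity)
    · rw [sub_ne_zero, Ne, sq_eq_sq₀ ht (by linarith)]
      exact ha
    · rw [sub_ne_zero, Ne, sq_eq_sq₀ (by linarith) ht]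
      exact hb.symm
  exact fun h => hne (by rw [h, sub_self])

lemma Krs_eq_zero_of_notMem {d : ℕ} {r s t : ℝ} (ht : t ∉ Ioo (r - s) (r + s)) :
    Krs d r s t = 0 := by
  simp [Krs, indicator_of_notMem ht]

lemma support_Krs_subset (d : ℕ) (r s : ℝ) : Function.support (Krs d r s) ⊆ Ioo (r - s) (r + s) :=
  fun _ ht => by_contra fun hmem => ht (Krs_eq_zero_of_notMem hmem)

lemma Krs_two_eq {r s t : ℝ} (hs : 0 < s) (hsr : s ≤ r) (ht : 0 ≤ t) :
    Krs 2 r s t = t / (r * s) / √(1 - cosAngle r s t ^ 2) / π := by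
  by_cases hmem : t ∈ Ioo (r - s) (r + s)
  · have hpos : 0 ≤ 1 - cosAngle r s t ^ 2 :=
      sub_nonneg.2 ((cosAngle_sq_lt_one_iff hs hsr ht).2 hmem).le
    have hexp : (((2 : ℕ) : ℝ) - 3) / 2 = -(1 / 2) := by norm_num
    simp only [Krs, indicator_of_mem hmem, Pi.one_apply, mul_one, Nat.sub_self,
      show (2 : ℕ) - 1 = 1 from rfl, sphereArea_zero, sphereArea_one, hexp]
    rw [← cosAngle, rpow_neg hpos, ← sqrt_eq_rpow]
    field_simp
  · have hneg : 1 - cosAngle r s t ^ 2 ≤ 0 :=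
      sub_nonpos.2 (not_lt.1 fun h => hmem ((cosAngle_sq_lt_one_iff hs hsr ht).1 h))
    rw [Krs_eq_zero_of_notMem hmem, sqrt_eq_zero'.2 hneg, div_zero, zero_div]

lemma hasDerivAt_neg_arcsin_cosAngle_div_pi {r s t : ℝ} (hr : r ≠ 0) (hs : s ≠ 0)
    (h : cosAngle r s t ^ 2 ≠ 1) :
    HasDerivAt (fun t => -arcsin (cosAngle r s t) / π)
      (t / (r * s) / √(1 - cosAngle r s t ^ 2) / π) t := by
  have hc : HasDerivAt (cosAngle r s) (-(t / (r * s))) t := by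
    refine (((hasDerivAt_pow 2 t).const_sub (r ^ 2 + s ^ 2)).div_const (2 * r * s)).congr_deriv ?_
    field_simp
    ring
  have h₁ : cosAngle r s t ≠ -1 := fun h' => h (by rw [h']; norm_num)
  have h₂ : cosAngle r s t ≠ 1 := fun h' => h (by rw [h']; norm_num)
  exact ((((hasDerivAt_arcsin h₁ h₂).comp t hc).neg).div_const π).congr_deriv (by ring)

lemma hasDerivAt_Krs_two_primitive {r s t : ℝ} (hs : 0 < s) (hsr : s ≤ r) (ht : 0 ≤ t)
    (ha : t ≠ r - s) (hb : t ≠ r + s) :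
    HasDerivAt (fun t => -arcsin (cosAngle r s t) / π) (Krs 2 r s t) t := by
  rw [Krs_two_eq hs hsr ht]
  exact hasDerivAt_neg_arcsin_cosAngle_div_pi (hs.trans_le hsr).ne' hs.ne'
    (cosAngle_sq_ne_one hs hsr ht ha hb)

lemma continuous_neg_arcsin_cosAngle_div_pi (r s : ℝ) :
    Continuous (fun t => -arcsin (cosAngle r s t) / π) := by
  unfold cosAngle
  fun_prop

lemma integrable_Krs_two {r s : ℝ} (hs : 0 < s) (hsr : s ≤ r) : Integrable (Krs 2 r s) := by
  rw [← integrableOn_iff_integrable_of_support_subset (support_Krs_subset 2 r s)]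
  have ha : 0 ≤ r - s := sub_nonneg.2 hsr
  refine (intervalIntegral.integrableOn_deriv_of_nonneg
    (continuous_neg_arcsin_cosAngle_div_pi r s).continuousOn
    (fun t ht => hasDerivAt_Krs_two_primitive hs hsr (ha.trans ht.1.le) ht.1.ne' ht.2.ne)
    (fun t ht => ?_)).mono_set Ioo_subset_Ioc_self
  have ht : 0 ≤ t := ha.trans ht.1.le
  rw [Krs_two_eq hs hsr ht]
  have := hs.trans_le hsr
  positivity

lemma integral_Krs_two {r s P Q : ℝ} (hs : 0 < s) (hsr : s ≤ r) (hP : 0 ≤ P) (hPQ : P ≤ Q) :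
    ∫ t in P..Q, Krs 2 r s t = (arcsin (cosAngle r s P) - arcsin (cosAngle r s Q)) / π := by
  -- the primitive is locally constant outside `[r - s, r + s]`, where `Krs 2 r s` vanishes
  rw [integral_eq_of_hasDerivAt_off_countable_of_le _ _ hPQ ((countable_singleton _).insert _)
    (continuous_neg_arcsin_cosAngle_div_pi r s).continuousOn
    (fun t ht => hasDerivAt_Krs_two_primitive hs hsr (hP.trans ht.1.1.le)
      (fun h => ht.2 (Or.inl h)) (fun h => ht.2 (Or.inr h)))
    (integrable_Krs_two hs hsr).intervalIntegrable]
  ring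

lemma cosAngle_antitoneOn {r s : ℝ} (hr : 0 < r) (hs : 0 < s) :
    AntitoneOn (cosAngle r s) (Ici 0) := fun t ht u _ htu => by
  unfold cosAngle
  gcongr

lemma cosAngle_sub_cosAngle_le {ε r s : ℝ} (hε0 : 0 < ε) (hε : ε ≤ 1 / 11) (hsr : s ≤ r)
    (hs : (1 - ε) / 2 ≤ s) :
    cosAngle r s (1 - ε) - cosAngle r s (1 + ε) ≤ 242 / 25 * ε := by
  have hs0 : 0 < s := by linarith
  have hr0 : 0 < r := hs0.trans_le hsr
  -- `r s ≥ s ^ 2 ≥ (1 - ε) ^ 2 / 4 ≥ 25 / 121`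
  have hrs : 25 / 121 ≤ r * s := by nlinarith
  rw [cosAngle, cosAngle, ← sub_div, div_le_iff₀ (by positivity)]
  nlinarith

lemma sqrt_242_div_25_mul (ε : ℝ) : √(242 / 25 * ε) = 11 * √2 / 5 * √ε := by
  rw [sqrt_mul (by norm_num), show (242 / 25 : ℝ) = (11 / 5) ^ 2 * 2 by norm_num,
    sqrt_mul (by positivity), sqrt_sq (by norm_num)]
  ring

/-- For `d = 2` and `0 < ε ≤ 1/11`, the kernel supremum is at most `(22√2/(5π))√ε`. -/
theorem Ksup_bound_dim_two (ε : ℝ) (hε0 : 0 < ε) (hε : ε ≤ 1/11) :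
    Ksup 2 ε ≤ (22 * Real.sqrt 2 / (5 * Real.pi)) * Real.sqrt ε := by
  refine Real.sSup_le ?_ (by positivity)
  rintro _ ⟨r, s, hsr, hs, rfl⟩
  have hgap := cosAngle_sub_cosAngle_le hε0 hε hsr hs
  have hmono : cosAngle r s (1 + ε) ≤ cosAngle r s (1 - ε) :=
    cosAngle_antitoneOn (by linarith) (by linarith) (mem_Ici.2 (by linarith))
      (mem_Ici.2 (by linarith)) (by linarith)
  rw [integral_Krs_two (by linarith) hsr (by linarith) (by linarith)]
  calc (arcsin (cosAngle r s (1 - ε)) - arcsin (cosAngle r s (1 + ε))) / π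
      ≤ 2 * √(cosAngle r s (1 - ε) - cosAngle r s (1 + ε)) / π := by
        gcongr
        exact arcsin_sub_arcsin_le_two_sqrt hmono (by linarith)
    _ ≤ 2 * √(242 / 25 * ε) / π := by gcongr
    _ = 22 * √2 / (5 * π) * √ε := by
        rw [sqrt_242_div_25_mul]
        ring
end
end

section
/- Let d ≥ 3 and 0 < ε < 1. Then sup_{r ≥ s ≥ (1−ε)/2} ∫_{1−ε}^{1+ε} K_{r,s}(t) dt ≤ (|S^{d−2}|/|S^{d−1}|) · 8ε/(1−ε)². -/
open MeasureTheory Metric Filter Set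
open scoped ENNReal NNReal Topology

noncomputable section

set_option maxHeartbeats 1000000 in
/-- For `d ≥ 3` and `0 < ε < 1`, the kernel supremum is at most
`(|S^{d-2}|/|S^{d-1}|) ⬝ 8ε/(1-ε)²`. -/
theorem Ksup_bound_high_dim (d : ℕ) (hd : 3 ≤ d) (ε : ℝ) (hε0 : 0 < ε) (hε1 : ε < 1) :
    Ksup d ε ≤ (sphereArea (d-2) / sphereArea (d-1)) * (8 * ε / (1 - ε)^2) := by
  have hC : 0 ≤ sphereArea (d-2) / sphereArea (d-1) :=
    div_nonneg ENNReal.toReal_nonneg ENNReal.toReal_nonneg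
  set C := sphereArea (d-2) / sphereArea (d-1) with hCdef
  have h1ε : (0:ℝ) < 1 - ε := by linarith
  have hRHS : 0 ≤ C * (8 * ε / (1-ε)^2) :=
    mul_nonneg hC (div_nonneg (by linarith) (sq_nonneg _))
  apply Real.sSup_le _ hRHS
  rintro v ⟨r, s, hsr, hs, rfl⟩
  have hs0 : 0 < s := lt_of_lt_of_le (by linarith) hs
  have hr0 : 0 < r := lt_of_lt_of_le hs0 hsr
  have hrs0 : 0 < r * s := mul_pos hr0 hs0
  have hexp : (0:ℝ) ≤ ((d:ℝ) - 3)/2 := by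
    have : (3:ℝ) ≤ d := by exact_mod_cast hd
    linarith
  have hfun : Krs d r s = Set.indicator (Set.Ioo (r-s) (r+s))
      (fun t => C * ((1 - ((r^2 + s^2 - t^2) / (2*r*s))^2) ^ (((d : ℝ) - 3)/2)) * (t/(r*s))) := by
    funext t
    by_cases h : t ∈ Set.Ioo (r-s) (r+s) <;>
      simp [Krs, Set.indicator_of_mem, Set.indicator_of_notMem, h, hCdef]
  have hcont : Continuous
      (fun t : ℝ => C * ((1 - ((r^2 + s^2 - t^2) / (2*r*s))^2) ^ (((d : ℝ) - 3)/2)) * (t/(r*s))) := by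
    refine Continuous.mul (Continuous.mul continuous_const ?_) (continuous_id.div_const _)
    exact Continuous.rpow_const (by continuity) (fun x => Or.inr hexp)
  have hInt : IntervalIntegrable (Krs d r s) volume (1-ε) (1+ε) := by
    rw [hfun, intervalIntegrable_iff_integrableOn_Ioc_of_le (by linarith)]
    exact (hcont.integrableOn_Ioc).indicator measurableSet_Ioo
  have hbd : ∀ t ∈ Set.Icc (1-ε) (1+ε), Krs d r s t ≤ C * (t/(r*s)) := by
    intro t ht
    have ht0 : 0 < t := lt_of_lt_of_le h1ε ht.1
    have hCt : 0 ≤ C * (t/(r*s)) :=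
      mul_nonneg hC (div_nonneg ht0.le hrs0.le)
    rw [hfun]
    by_cases h : t ∈ Set.Ioo (r-s) (r+s)
    · rw [Set.indicator_of_mem h]
      obtain ⟨h1, h2⟩ := h
      have hx : ((r^2+s^2-t^2)/(2*r*s))^2 ≤ 1 := by
        rw [div_pow, div_le_one (by positivity)]
        have ha : (r-s)^2 < t^2 := by nlinarith
        have hb : t^2 < (r+s)^2 := by nlinarith
        nlinarith [mul_pos (sub_pos.2 ha) (sub_pos.2 hb)]
      have hg : (1 - ((r^2+s^2-t^2)/(2*r*s))^2) ^ (((d : ℝ) - 3)/2) ≤ 1 :=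
        Real.rpow_le_one (by linarith) (by nlinarith [sq_nonneg ((r^2+s^2-t^2)/(2*r*s))]) hexp
      calc C * ((1 - ((r^2+s^2-t^2)/(2*r*s))^2) ^ (((d : ℝ) - 3)/2)) * (t/(r*s))
          ≤ C * 1 * (t/(r*s)) := by
            apply mul_le_mul_of_nonneg_right _ (div_nonneg ht0.le hrs0.le)
            exact mul_le_mul_of_nonneg_left hg hC
        _ = C * (t/(r*s)) := by ring
    · rw [Set.indicator_of_notMem h]
      exact hCt
  have hbInt : IntervalIntegrable (fun t : ℝ => C * (t/(r*s))) volume (1-ε) (1+ε) :=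
    ((continuous_const.mul (continuous_id.div_const _))).intervalIntegrable _ _
  calc (∫ t in (1-ε)..(1+ε), Krs d r s t)
      ≤ ∫ t in (1-ε)..(1+ε), C * (t/(r*s)) :=
        intervalIntegral.integral_mono_on (by linarith) hInt hbInt hbd
    _ = (C/(r*s)) * (((1+ε)^2 - (1-ε)^2)/2) := by
        have : (fun t : ℝ => C * (t/(r*s))) = fun t : ℝ => (C/(r*s)) * t := by
          funext t; ring
        rw [this, intervalIntegral.integral_const_mul, integral_id]
    _ = C * (2*ε/(r*s)) := by ring
    _ ≤ C * (8 * ε / (1 - ε)^2) := by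
        refine mul_le_mul_of_nonneg_left ?_ hC
        have hrs : (1-ε)^2/4 ≤ r*s := by nlinarith
        rw [div_le_div_iff₀ hrs0 (by positivity)]
        nlinarith
end
end

section
/- Let d = 2, let 0 < ε ≤ 1/11, and let r ≥ s ≥ (1−ε)/2. Then ∫_{(1−ε)²}^{(1+ε)²} (1 − ((r²+s²−u)/(2rs))²)_+^{−1/2} du ≤ √(2rs) · 2√(4ε). -/
open MeasureTheory Metric Filter Set
open scoped ENNReal NNReal Topology
noncomputable section

lemma rpow_neg_half_of_nonpos {x : ℝ} (hx : x ≤ 0) : x ^ (-(1/2:ℝ)) = 0 := by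
  rcases eq_or_lt_of_le hx with h | h
  · rw [h, Real.zero_rpow (by norm_num)]
  · rw [Real.rpow_def_of_neg h,
      show (-(1/2:ℝ) * Real.pi) = -(Real.pi/2) by ring, Real.cos_neg,
      Real.cos_pi_div_two, mul_zero]

lemma max_rpow_neg_half (x : ℝ) : (max x 0) ^ (-(1/2:ℝ)) = x ^ (-(1/2:ℝ)) := by
  rcases le_or_gt x 0 with h | h
  · rw [max_eq_right h, rpow_neg_half_of_nonpos le_rfl, rpow_neg_half_of_nonpos h]
  · rw [max_eq_left h.le]

lemma rpow_neg_half_nonneg (x : ℝ) : 0 ≤ x ^ (-(1/2:ℝ)) := by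
  rw [← max_rpow_neg_half]
  exact Real.rpow_nonneg (le_max_right _ _) _

lemma sqrt_sub_sqrt_le (A L R : ℝ) (h : L ≤ R) :
    Real.sqrt (R - A) - Real.sqrt (L - A) ≤ Real.sqrt (R - L) := by
  rcases le_or_gt A L with hA | hA
  · have h1 : Real.sqrt (R - A) ≤ Real.sqrt (L - A) + Real.sqrt (R - L) := by
      nlinarith [Real.sq_sqrt (sub_nonneg.2 hA), Real.sq_sqrt (sub_nonneg.2 h),
        Real.sq_sqrt (sub_nonneg.2 (hA.trans h)), Real.sqrt_nonneg (L - A),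
        Real.sqrt_nonneg (R - L), Real.sqrt_nonneg (R - A),
        mul_nonneg (Real.sqrt_nonneg (L - A)) (Real.sqrt_nonneg (R - L))]
    linarith
  · have h0 : Real.sqrt (L - A) = 0 := Real.sqrt_eq_zero'.2 (by linarith)
    rw [h0, sub_zero]
    exact Real.sqrt_le_sqrt (by linarith)

lemma sqrt_mul_sub_le {c p : ℝ} (hp : 0 ≤ p) (hpc : p ≤ c) :
    Real.sqrt c * (Real.sqrt c - Real.sqrt (c - p)) ≤ p := by
  nlinarith [Real.sq_sqrt (hp.trans hpc), Real.sq_sqrt (sub_nonneg.2 hpc),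
    Real.sqrt_nonneg c, Real.sqrt_nonneg (c - p),
    Real.sqrt_le_sqrt (by linarith : c - p ≤ c),
    mul_nonneg (Real.sqrt_nonneg (c - p))
      (sub_nonneg.2 (Real.sqrt_le_sqrt (by linarith : c - p ≤ c)))]

lemma integral_shift_rpow (A L R : ℝ) :
    ∫ u in L..R, (u - A) ^ (-(1/2:ℝ)) = 2 * (Real.sqrt (R - A) - Real.sqrt (L - A)) := by
  rw [intervalIntegral.integral_comp_sub_right (fun x => x ^ (-(1/2:ℝ))) A,
    integral_rpow (Or.inl (by norm_num)),
    show (-(1/2:ℝ) + 1) = 1/2 by norm_num, ← Real.sqrt_eq_rpow, ← Real.sqrt_eq_rpow]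
  ring

lemma integral_shift_rpow' (B L R : ℝ) :
    ∫ u in L..R, (B - u) ^ (-(1/2:ℝ)) = 2 * (Real.sqrt (B - L) - Real.sqrt (B - R)) := by
  rw [intervalIntegral.integral_comp_sub_left (fun x => x ^ (-(1/2:ℝ))) B,
    integral_rpow (Or.inl (by norm_num)),
    show (-(1/2:ℝ) + 1) = 1/2 by norm_num, ← Real.sqrt_eq_rpow, ← Real.sqrt_eq_rpow]
  ring

lemma key_le {c x y : ℝ} (hc : 0 < c) (hx : 0 < x) (hxy : x / c ≤ y) :
    y ^ (-(1/2:ℝ)) ≤ Real.sqrt c * x ^ (-(1/2:ℝ)) := by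
  have hxc : 0 < x / c := div_pos hx hc
  have h1 : y ^ (-(1/2:ℝ)) ≤ (x / c) ^ (-(1/2:ℝ)) :=
    Real.rpow_le_rpow_of_nonpos hxc hxy (by norm_num)
  refine h1.trans_eq ?_
  rw [Real.div_rpow hx.le hc.le, Real.rpow_neg hc.le, div_eq_mul_inv, inv_inv,
    ← Real.sqrt_eq_rpow]
  ring

lemma pointA {r s u : ℝ} (hs : 0 < s) (hsr : s ≤ r) (hu : u ≤ r^2 + s^2) :
    (max (1 - ((r^2 + s^2 - u)/(2*r*s))^2) 0) ^ (-(1/2:ℝ))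
      ≤ Real.sqrt (2*r*s) * (u - (r-s)^2) ^ (-(1/2:ℝ)) := by
  have hr : 0 < r := lt_of_lt_of_le hs hsr
  have hc : 0 < 2*r*s := by positivity
  rw [max_rpow_neg_half]
  rcases le_or_gt u ((r-s)^2) with hA | hA
  · have h1 : 1 - ((r^2+s^2-u)/(2*r*s))^2 ≤ 0 := by
      rw [sub_nonpos, div_pow, le_div_iff₀ (by positivity)]
      nlinarith [sq_nonneg (r - s)]
    rw [rpow_neg_half_of_nonpos h1]
    exact mul_nonneg (Real.sqrt_nonneg _) (rpow_neg_half_nonneg _)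
  · have hid : 1 - ((r^2+s^2-u)/(2*r*s))^2 = (u - (r-s)^2)*((r+s)^2 - u)/(2*r*s)^2 := by
      field_simp
      ring
    have hBu : 2*r*s ≤ (r+s)^2 - u := by nlinarith
    refine key_le hc (by linarith) ?_
    rw [hid, div_le_div_iff₀ hc (by positivity)]
    nlinarith [mul_le_mul_of_nonneg_left hBu (by linarith : (0:ℝ) ≤ u - (r-s)^2)]

lemma pointB {r s u : ℝ} (hs : 0 < s) (hsr : s ≤ r) (hu : r^2 + s^2 ≤ u) :
    (max (1 - ((r^2 + s^2 - u)/(2*r*s))^2) 0) ^ (-(1/2:ℝ))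
      ≤ Real.sqrt (2*r*s) * ((r+s)^2 - u) ^ (-(1/2:ℝ)) := by
  have hr : 0 < r := lt_of_lt_of_le hs hsr
  have hc : 0 < 2*r*s := by positivity
  rw [max_rpow_neg_half]
  rcases le_or_gt ((r+s)^2) u with hB | hB
  · have h1 : 1 - ((r^2+s^2-u)/(2*r*s))^2 ≤ 0 := by
      rw [sub_nonpos, div_pow, le_div_iff₀ (by positivity)]
      nlinarith [sq_nonneg (r + s)]
    rw [rpow_neg_half_of_nonpos h1]
    exact mul_nonneg (Real.sqrt_nonneg _) (rpow_neg_half_nonneg _)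
  · have hid : 1 - ((r^2+s^2-u)/(2*r*s))^2 = (u - (r-s)^2)*((r+s)^2 - u)/(2*r*s)^2 := by
      field_simp
      ring
    have hAu : 2*r*s ≤ u - (r-s)^2 := by nlinarith
    refine key_le hc (by linarith) ?_
    rw [hid, div_le_div_iff₀ hc (by positivity)]
    nlinarith [mul_le_mul_of_nonneg_left hAu (by linarith : (0:ℝ) ≤ (r+s)^2 - u)]

/-- The key integral estimate in dimension 2:
`∫_{(1-ε)²}^{(1+ε)²} (1 - ((r²+s²-u)/(2rs))²)₊^{-1/2} du ≤ √(2rs) ⬝ 2√(4ε)`. -/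
theorem integral_estimate_dim_two (d : ℕ) (hd : 2 ≤ d) (hd2 : d = 2)
    (ε : ℝ) (hε0 : 0 < ε) (hε1 : ε < 1) (hε : ε ≤ 1/11)
    (r s : ℝ) (hsr : s ≤ r) (hs : (1 - ε)/2 ≤ s) :
    ∫ u in ((1-ε)^2)..((1+ε)^2),
        (max (1 - ((r^2 + s^2 - u)/(2*r*s))^2) 0) ^ (-(1/2 : ℝ))
      ≤ Real.sqrt (2*r*s) * 2 * Real.sqrt (4*ε) := by
  have hs0 : 0 < s := by linarith
  have hr0 : 0 < r := lt_of_lt_of_le hs0 hsr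
  have hc0 : 0 < 2*r*s := by positivity
  have hεc : 4*ε ≤ 2*r*s := by
    nlinarith [mul_le_mul_of_nonneg_right hsr hs0.le,
      mul_le_mul hs hs (by linarith : (0:ℝ) ≤ (1-ε)/2) hs0.le, sq_nonneg ε]
  have hLR : ((1-ε):ℝ)^2 ≤ (1+ε)^2 := by nlinarith
  have hRL : ((1+ε):ℝ)^2 - (1-ε)^2 = 4*ε := by ring
  have h4ε : Real.sqrt (4*ε) ≤ Real.sqrt (2*r*s) := Real.sqrt_le_sqrt hεc
  by_cases hInt : IntervalIntegrable
      (fun u => (max (1 - ((r^2 + s^2 - u)/(2*r*s))^2) 0) ^ (-(1/2 : ℝ)))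
      volume ((1-ε)^2) ((1+ε)^2)
  swap
  · rw [intervalIntegral.integral_undef hInt]
    positivity
  have hIA : ∀ L' R' : ℝ, IntervalIntegrable
      (fun u => Real.sqrt (2*r*s) * (u - (r-s)^2) ^ (-(1/2:ℝ))) volume L' R' := by
    intro L' R'
    have h := (intervalIntegral.intervalIntegrable_rpow'
      (a := L' - (r-s)^2) (b := R' - (r-s)^2)
      (by norm_num : (-1:ℝ) < -(1/2))).comp_sub_right ((r-s)^2)
    simpa using h.const_mul _
  have hIB : ∀ L' R' : ℝ, IntervalIntegrable
      (fun u => Real.sqrt (2*r*s) * ((r+s)^2 - u) ^ (-(1/2:ℝ))) volume L' R' := by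
    intro L' R'
    have h := (intervalIntegral.intervalIntegrable_rpow'
      (a := (r+s)^2 - L') (b := (r+s)^2 - R')
      (by norm_num : (-1:ℝ) < -(1/2))).comp_sub_left ((r+s)^2)
    simpa using h.const_mul _
  have hvalA : ∀ L' R' : ℝ,
      (∫ u in L'..R', Real.sqrt (2*r*s) * (u - (r-s)^2) ^ (-(1/2:ℝ)))
        = Real.sqrt (2*r*s) * (2 * (Real.sqrt (R' - (r-s)^2) - Real.sqrt (L' - (r-s)^2))) := by
    intro L' R'
    rw [intervalIntegral.integral_const_mul, integral_shift_rpow]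
  have hvalB : ∀ L' R' : ℝ,
      (∫ u in L'..R', Real.sqrt (2*r*s) * ((r+s)^2 - u) ^ (-(1/2:ℝ)))
        = Real.sqrt (2*r*s) * (2 * (Real.sqrt ((r+s)^2 - L') - Real.sqrt ((r+s)^2 - R'))) := by
    intro L' R'
    rw [intervalIntegral.integral_const_mul, integral_shift_rpow']
  rcases le_or_gt (r^2+s^2) ((1-ε)^2) with hcase | hcase
  · -- midpoint left of interval : use B majorant everywhere
    have hmono := intervalIntegral.integral_mono_on hLR hInt (hIB _ _)
      (fun u hu => pointB hs0 hsr (le_trans hcase hu.1))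
    rw [hvalB _ _] at hmono
    refine hmono.trans ?_
    have h1 : Real.sqrt ((r+s)^2 - (1-ε)^2) - Real.sqrt ((r+s)^2 - (1+ε)^2)
        ≤ Real.sqrt (4*ε) := by
      have h2 := sqrt_sub_sqrt_le (-(r+s)^2) (-((1+ε)^2)) (-((1-ε)^2)) (by linarith)
      rw [show -((1-ε):ℝ)^2 - -(r+s)^2 = (r+s)^2 - (1-ε)^2 by ring,
          show -((1+ε):ℝ)^2 - -(r+s)^2 = (r+s)^2 - (1+ε)^2 by ring,
          show -((1-ε):ℝ)^2 - -((1+ε)^2) = 4*ε by ring] at h2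
      exact h2
    nlinarith [mul_le_mul_of_nonneg_left h1 (Real.sqrt_nonneg (2*r*s))]
  rcases le_or_gt ((1+ε)^2) (r^2+s^2) with hcase2 | hcase2
  · -- midpoint right of interval : use A majorant everywhere
    have hmono := intervalIntegral.integral_mono_on hLR hInt (hIA _ _)
      (fun u hu => pointA hs0 hsr (le_trans hu.2 hcase2))
    rw [hvalA _ _] at hmono
    refine hmono.trans ?_
    have h1 : Real.sqrt ((1+ε)^2 - (r-s)^2) - Real.sqrt ((1-ε)^2 - (r-s)^2)
        ≤ Real.sqrt (4*ε) := by
      have h2 := sqrt_sub_sqrt_le ((r-s)^2) ((1-ε)^2) ((1+ε)^2) hLR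
      rwa [hRL] at h2
    nlinarith [mul_le_mul_of_nonneg_left h1 (Real.sqrt_nonneg (2*r*s))]
  · -- straddle case : split at the midpoint r²+s²
    have hmem : r^2+s^2 ∈ Set.uIcc ((1-ε)^2) ((1+ε)^2) := by
      rw [Set.uIcc_of_le hLR]
      exact ⟨hcase.le, hcase2.le⟩
    have hi1 := hInt.mono_set (Set.uIcc_subset_uIcc Set.left_mem_uIcc hmem)
    have hi2 := hInt.mono_set (Set.uIcc_subset_uIcc hmem Set.right_mem_uIcc)
    rw [← intervalIntegral.integral_add_adjacent_intervals hi1 hi2]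
    have hm1 := intervalIntegral.integral_mono_on hcase.le hi1 (hIA _ _)
      (fun u hu => pointA hs0 hsr hu.2)
    have hm2 := intervalIntegral.integral_mono_on hcase2.le hi2 (hIB _ _)
      (fun u hu => pointB hs0 hsr hu.1)
    rw [hvalA _ _] at hm1
    rw [hvalB _ _] at hm2
    have b1 : Real.sqrt (2*r*s) *
        (2 * (Real.sqrt (r^2+s^2 - (r-s)^2) - Real.sqrt ((1-ε)^2 - (r-s)^2)))
        ≤ 2*(r^2+s^2 - (1-ε)^2) := by
      rw [show r^2+s^2 - (r-s)^2 = 2*r*s by ring,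
          show ((1-ε):ℝ)^2 - (r-s)^2 = 2*r*s - (r^2+s^2 - (1-ε)^2) by ring]
      have h3 := sqrt_mul_sub_le (c := 2*r*s) (p := r^2+s^2 - (1-ε)^2)
        (by linarith) (by linarith)
      nlinarith [h3]
    have b2 : Real.sqrt (2*r*s) *
        (2 * (Real.sqrt ((r+s)^2 - (r^2+s^2)) - Real.sqrt ((r+s)^2 - (1+ε)^2)))
        ≤ 2*((1+ε)^2 - (r^2+s^2)) := by
      rw [show (r+s)^2 - (r^2+s^2) = 2*r*s by ring,
          show (r+s)^2 - ((1+ε):ℝ)^2 = 2*r*s - ((1+ε)^2 - (r^2+s^2)) by ring]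
      have h3 := sqrt_mul_sub_le (c := 2*r*s) (p := (1+ε)^2 - (r^2+s^2))
        (by linarith) (by linarith)
      nlinarith [h3]
    have hfinal : 8*ε ≤ Real.sqrt (2*r*s) * 2 * Real.sqrt (4*ε) := by
      have hmm := mul_le_mul_of_nonneg_right h4ε (Real.sqrt_nonneg (4*ε))
      calc 8*ε = 2*(Real.sqrt (4*ε)*Real.sqrt (4*ε)) := by
              rw [Real.mul_self_sqrt (by linarith : (0:ℝ) ≤ 4*ε)]; ring
        _ ≤ 2*(Real.sqrt (2*r*s)*Real.sqrt (4*ε)) := by linarith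
        _ = Real.sqrt (2*r*s) * 2 * Real.sqrt (4*ε) := by ring
    linarith [hm1, hm2, b1, b2]
end
end

section
/- Let d ≥ 2, fix 0 < ε < ε_0 (with ε_0 as in the symmetry-breaking theorem for E_ε: ε_0 = (5π/(44√2))² for d = 2 and ε_0 = ((d−1)|S^{d−1}|)/(32d|S^{d−2}|) for d ≥ 3) and d−2 < s < d. Define W(x) = w(r), r = |x|, by w(r) = α r^{−s}(1 − φ(4r−7)) + w₂(r), where w₂(r) = 0 for r ≤ 1−ε; w₂(r) = −φ((r−(1−ε+β/2))/(β/2)) for 1−ε < r < 1−ε+β; w₂(r) = −1 for 1−ε+β ≤ r ≤ 1+ε−β; w₂(r) = −1 + φ(r−(2+ε−β))/φ(−1+β) for 1+ε−β < r < 3+ε−β; and w₂(r) = −1 + 1/φ(−1+β) for r ≥ 3+ε−β. Then for all sufficiently small α, β > 0 (with β < ε), W is smooth on ℝ^d \ {0}, and there exists r₀ > 0 such that w'(r) < 0 for 0 < r < r₀ and w'(r) ≥ 0 for r > r₀ (i.e., W is repulsive at short distance and attractive at long distance). -/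
open MeasureTheory Metric Filter Set
open scoped ENNReal NNReal Topology

noncomputable section

/-- The standard smooth bump function supported on `[-1,1]`. -/
def psi (x : ℝ) : ℝ := if |x| < 1 then Real.exp (-(1 - x^2)⁻¹) else 0

/-- The normalized antiderivative of `psi`. -/
def phi (x : ℝ) : ℝ := (∫ y in Set.Iic x, psi y) / ∫ y : ℝ, psi y

/-- The piecewise-defined attractive part `w₂` of the potential in the main construction. -/
def w2 (ε β r : ℝ) : ℝ :=
  if r ≤ 1 - ε then 0
  else if r < 1 - ε + β then -phi ((r - (1 - ε + β/2)) / (β/2))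
  else if r ≤ 1 + ε - β then -1
  else if r < 3 + ε - β then -1 + phi (r - (2 + ε - β)) / phi (-1 + β)
  else -1 + 1 / phi (-1 + β)

/-- The radial profile `w(r) = α r^{-s} (1 - φ(4r - 7)) + w₂(r)` of the constructed potential. -/
def wprof (α β ε s r : ℝ) : ℝ := α * r ^ (-s) * (1 - phi (4*r - 7)) + w2 ε β r

/-!
Write `w' = -α g + w₂'`, where the repulsive force `g = -(r^{-s}(1 - φ(4r - 7)))'` is positive
on `(0, 2)` and vanishes beyond. Below `1 + ε - β` the function `w₂` decreases, so `w' < 0` on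
`(0, min (1 + ε - β) 2)`; from `2` on, `w' = w₂' ≥ 0`. In between, `w₂'` is the left flank of a
bump of width `β`: its logarithmic growth rate, at least `1 / (4β²)`, beats that of `g` once `β`
is small, and past `1 + ε` it exceeds `1 / β`, which dominates `α g`. So `{r > 0 | w'(r) ≥ 0}`
is an up-set, and its infimum is the threshold `r₀`.
-/

open Real
open scoped ContDiff

/-- `log f` is Lipschitz on the segment. -/
lemma ContDiffOn.exists_le_mul_exp_of_pos {f : ℝ → ℝ} {a b : ℝ}
    (hf : ContDiffOn ℝ 1 f (Icc a b)) (hpos : ∀ x ∈ Icc a b, 0 < f x) :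
    ∃ L ≥ 0, ∀ x ∈ Icc a b, ∀ y ∈ Icc a b, x ≤ y → f y ≤ f x * Real.exp (L * (y - x)) := by
  obtain ⟨K, hK⟩ := (hf.log fun x hx => (hpos x hx).ne').exists_lipschitzOnWith one_ne_zero
    (convex_Icc a b) isCompact_Icc
  refine ⟨K, K.coe_nonneg, fun x hx y hy hxy => ?_⟩
  have hlog : Real.log (f y) - Real.log (f x) ≤ K * (y - x) := by
    have := hK.dist_le_mul y hy x hx
    rw [Real.dist_eq, Real.dist_eq, abs_of_nonneg (sub_nonneg.2 hxy)] at this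
    exact (le_abs_self _).trans this
  calc f y = Real.exp (Real.log (f x) + (Real.log (f y) - Real.log (f x))) := by
        rw [add_sub_cancel, Real.exp_log (hpos y hy)]
    _ ≤ Real.exp (Real.log (f x) + K * (y - x)) := Real.exp_le_exp.2 (by linarith)
    _ = f x * Real.exp (K * (y - x)) := by rw [Real.exp_add, Real.exp_log (hpos x hx)]

/-- The threshold is the infimum of `{r > 0 | 0 ≤ D r}`. -/
lemma exists_sign_change_threshold {D : ℝ → ℝ} {c : ℝ} (hc : 0 < c)
    (hneg : ∀ r, 0 < r → r ≤ c → D r < 0) {r₁ : ℝ} (hr₁ : 0 < r₁) (hDr₁ : 0 ≤ D r₁)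
    (hup : ∀ x y, 0 < x → x ≤ y → 0 ≤ D x → 0 ≤ D y) :
    ∃ r₀ > 0, (∀ r, 0 < r → r < r₀ → D r < 0) ∧ ∀ r, r₀ < r → 0 ≤ D r := by
  set S := {r | 0 < r ∧ 0 ≤ D r}
  have hne : S.Nonempty := ⟨r₁, hr₁, hDr₁⟩
  have hbdd : BddBelow S := ⟨0, fun r hr => hr.1.le⟩
  have hcS : c ≤ sInf S := le_csInf hne fun r ⟨hr, hDr⟩ =>
    le_of_not_ge fun hrc => (hneg r hr hrc).not_ge hDr
  refine ⟨sInf S, hc.trans_le hcS, fun r hr hrS => ?_, fun r hr => ?_⟩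
  · exact lt_of_not_ge fun hDr => (csInf_le hbdd ⟨hr, hDr⟩).not_gt hrS
  · obtain ⟨x, ⟨hx, hDx⟩, hxr⟩ := exists_lt_of_csInf_lt hne hr
    exact hup x r hx hxr.le hDx

section Bump

lemma psi_eq_expNegInvGlue (x : ℝ) : psi x = expNegInvGlue (1 - x ^ 2) := by
  have hsq : |x| < 1 ↔ 0 < 1 - x ^ 2 := by
    rw [sub_pos, ← sq_abs, sq_lt_one_iff_abs_lt_one, abs_abs]
  by_cases h : |x| < 1
  · rw [psi, if_pos h, expNegInvGlue, if_neg (hsq.1 h).not_ge]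
  · rw [psi, if_neg h, expNegInvGlue.zero_of_nonpos (not_lt.1 (mt hsq.2 h))]

lemma contDiff_psi : ContDiff ℝ ∞ psi := by
  simp_rw [funext psi_eq_expNegInvGlue]
  exact expNegInvGlue.contDiff.comp (contDiff_const.sub (contDiff_id.pow 2))

lemma psi_nonneg (x : ℝ) : 0 ≤ psi x := by
  rw [psi_eq_expNegInvGlue]; exact expNegInvGlue.nonneg _

lemma psi_pos {x : ℝ} (hx : |x| < 1) : 0 < psi x := by
  rw [psi, if_pos hx]; exact exp_pos _

lemma psi_eq_zero {x : ℝ} (hx : 1 ≤ |x|) : psi x = 0 := by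
  rw [psi, if_neg hx.not_gt]

lemma monotoneOn_psi : MonotoneOn psi (Iic 0) := fun x _ y hy hxy => by
  simp only [psi_eq_expNegInvGlue]
  exact expNegInvGlue.monotone (by nlinarith [mem_Iic.1 hy])

lemma antitoneOn_psi : AntitoneOn psi (Ici 0) := fun x hx y _ hxy => by
  simp only [psi_eq_expNegInvGlue]
  exact expNegInvGlue.monotone (by nlinarith [mem_Ici.1 hx])

lemma psi_mul_exp_le {β x y : ℝ} (hβ : β ≤ 1 / 2) (hx : -1 < x) (hxy : x ≤ y)
    (hy : y ≤ -1 + β) : psi x * exp ((y - x) / (4 * β ^ 2)) ≤ psi y := by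
  rw [psi, psi, if_pos (abs_lt.2 ⟨hx, by linarith⟩),
    if_pos (abs_lt.2 ⟨by linarith, by linarith⟩), ← exp_add, exp_le_exp]
  have hx2 : 0 < 1 - x ^ 2 := by nlinarith
  have hy2 : 0 < 1 - y ^ 2 := by nlinarith
  have hgap :
      (1 - x ^ 2)⁻¹ - (1 - y ^ 2)⁻¹ = (x ^ 2 - y ^ 2) / ((1 - x ^ 2) * (1 - y ^ 2)) := by
    field_simp
    ring
  have hnum : y - x ≤ x ^ 2 - y ^ 2 := by nlinarith
  have hden : (1 - x ^ 2) * (1 - y ^ 2) ≤ 4 * β ^ 2 := by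
    calc (1 - x ^ 2) * (1 - y ^ 2) ≤ (2 * β) * (2 * β) :=
          mul_le_mul (by nlinarith) (by nlinarith) hy2.le (by linarith)
      _ = 4 * β ^ 2 := by ring
  have : (y - x) / (4 * β ^ 2) ≤ (x ^ 2 - y ^ 2) / ((1 - x ^ 2) * (1 - y ^ 2)) :=
    div_le_div₀ (by linarith) hnum (by positivity) hden
  linarith

lemma integrable_psi : Integrable psi := by
  refine contDiff_psi.continuous.integrable_of_hasCompactSupport
    (HasCompactSupport.intro (isCompact_Icc (a := -1) (b := 1)) fun x hx => psi_eq_zero ?_)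
  rw [mem_Icc, not_and_or, not_le, not_le] at hx
  rcases hx with hx | hx
  · rw [abs_of_neg (by linarith)]; linarith
  · rw [abs_of_pos (by linarith)]; linarith

end Bump

section Transition

def psiMass : ℝ := ∫ y, psi y

lemma psiMass_pos : 0 < psiMass := by
  rw [psiMass, integral_pos_iff_support_of_nonneg psi_nonneg integrable_psi]
  calc (0 : ℝ≥0∞) < volume (Ioo (-1 : ℝ) 1) := by rw [Real.volume_Ioo]; norm_num
    _ ≤ _ := measure_mono fun x hx => (psi_pos (abs_lt.2 hx)).ne'

lemma phi_eq_integral_div (x : ℝ) : phi x = (∫ y in Iic x, psi y) / psiMass := rfl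

lemma hasDerivAt_phi (x : ℝ) : HasDerivAt phi (psi x / psiMass) x := by
  have hcont := contDiff_psi.continuous
  have hsplit : (fun t => ∫ y in Iic t, psi y)
      = fun t => (∫ y in Iic (x - 1), psi y) + ∫ y in (x - 1)..t, psi y := by
    funext t
    rw [← intervalIntegral.integral_Iic_sub_Iic integrable_psi.integrableOn
      integrable_psi.integrableOn]
    ring
  have hint : HasDerivAt (fun t => ∫ y in Iic t, psi y) (psi x) x := by
    rw [hsplit]
    exact (intervalIntegral.integral_hasDerivAt_right (hcont.intervalIntegrable _ _)
      (hcont.stronglyMeasurableAtFilter _ _) hcont.continuousAt).const_add _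
  exact hint.div_const psiMass

lemma contDiff_phi : ContDiff ℝ ∞ phi := by
  rw [contDiff_infty_iff_deriv]
  refine ⟨fun x => (hasDerivAt_phi x).differentiableAt, ?_⟩
  rw [funext fun x => (hasDerivAt_phi x).deriv]
  exact contDiff_psi.div_const _

lemma phi_eq_zero {x : ℝ} (hx : x ≤ -1) : phi x = 0 := by
  have : ∫ y in Iic x, psi y = 0 := setIntegral_eq_zero_of_forall_eq_zero fun y hy => by
    rw [mem_Iic] at hy
    exact psi_eq_zero (by rw [abs_of_neg (by linarith)]; linarith)
  rw [phi_eq_integral_div, this, zero_div]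

lemma phi_eq_one {x : ℝ} (hx : 1 ≤ x) : phi x = 1 := by
  have htail : ∫ y in Ioi x, psi y = 0 := setIntegral_eq_zero_of_forall_eq_zero fun y hy => by
    rw [mem_Ioi] at hy
    exact psi_eq_zero (by rw [abs_of_pos (by linarith)]; linarith)
  have htotal : ∫ y in Iic x, psi y = psiMass := by
    rw [psiMass, ← intervalIntegral.integral_Iic_add_Ioi integrable_psi.integrableOn
      integrable_psi.integrableOn, htail, add_zero]
  rw [phi_eq_integral_div, htotal, div_self psiMass_pos.ne']

lemma monotone_phi : Monotone phi :=
  monotone_of_hasDerivAt_nonneg hasDerivAt_phi fun x =>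
    div_nonneg (psi_nonneg x) psiMass_pos.le

lemma strictMonoOn_phi : StrictMonoOn phi (Icc (-1) 1) :=
  strictMonoOn_of_deriv_pos (convex_Icc _ _) contDiff_phi.continuous.continuousOn fun x hx => by
    rw [interior_Icc] at hx
    rw [(hasDerivAt_phi x).deriv]
    exact div_pos (psi_pos (abs_lt.2 hx)) psiMass_pos

lemma phi_nonneg (x : ℝ) : 0 ≤ phi x :=
  phi_eq_zero (min_le_left (-1) x) ▸ monotone_phi (min_le_right (-1) x)

lemma phi_le_one (x : ℝ) : phi x ≤ 1 :=
  phi_eq_one (le_max_right x 1) ▸ monotone_phi (le_max_left x 1)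

lemma phi_pos {x : ℝ} (hx : -1 < x) : 0 < phi x := by
  have h : phi (-1) < phi (min x 1) :=
    strictMonoOn_phi (by norm_num) ⟨le_min hx.le (by norm_num), min_le_right _ _⟩
      (lt_min hx (by norm_num))
  rw [phi_eq_zero le_rfl] at h
  exact h.trans_le (monotone_phi (min_le_left _ _))

lemma phi_lt_one {x : ℝ} (hx : x < 1) : phi x < 1 := by
  have h : phi (max x (-1)) < phi 1 :=
    strictMonoOn_phi ⟨le_max_right _ _, max_le hx.le (by norm_num)⟩ (by norm_num)
      (max_lt hx (by norm_num))
  rw [phi_eq_one le_rfl] at h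
  exact (monotone_phi (le_max_left _ _)).trans_lt h

lemma phi_neg_one_add_le {β : ℝ} (hβ0 : 0 ≤ β) (hβ1 : β ≤ 1) :
    phi (-1 + β) ≤ β * (psi (-1 + β) / psiMass) := by
  have hmvt := (convex_Icc (-1 : ℝ) (-1 + β)).image_sub_le_mul_sub_of_deriv_le
    contDiff_phi.continuous.continuousOn
    (fun x _ => (hasDerivAt_phi x).differentiableAt.differentiableWithinAt)
    (C := psi (-1 + β) / psiMass) (fun x hx => by
      rw [interior_Icc] at hx
      rw [(hasDerivAt_phi x).deriv]
      exact div_le_div_of_nonneg_right (monotoneOn_psi (mem_Iic.2 (by linarith [hx.2]))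
        (mem_Iic.2 (by linarith)) hx.2.le) psiMass_pos.le)
    (-1) ⟨le_rfl, by linarith⟩ (-1 + β) ⟨by linarith, le_rfl⟩ (by linarith)
  rw [phi_eq_zero le_rfl] at hmvt
  linarith

end Transition

section Repulsion

variable {s r : ℝ}

def repulsion (s r : ℝ) : ℝ := r ^ (-s) * (1 - phi (4 * r - 7))

def repulsionForce (s r : ℝ) : ℝ :=
  s * r ^ (-s - 1) * (1 - phi (4 * r - 7)) + 4 * r ^ (-s) * (psi (4 * r - 7) / psiMass)

lemma hasDerivAt_repulsion (hr : 0 < r) :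
    HasDerivAt (repulsion s) (-repulsionForce s r) r := by
  have hpow : HasDerivAt (fun t : ℝ => t ^ (-s)) (-s * r ^ (-s - 1)) r :=
    hasDerivAt_rpow_const (Or.inl hr.ne')
  have hin : HasDerivAt (fun t : ℝ => 4 * t - 7) 4 r := by
    simpa using ((hasDerivAt_id r).const_mul 4).sub_const 7
  have hcut := ((hasDerivAt_phi _).comp r hin).const_sub 1
  refine (hpow.mul hcut).congr_deriv ?_
  simp only [repulsionForce, Function.comp_apply]
  ring

lemma contDiffAt_repulsion (hr : 0 < r) : ContDiffAt ℝ ∞ (repulsion s) r :=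
  (contDiffAt_rpow_const_of_ne hr.ne').mul
    (contDiffAt_const.sub (contDiff_phi.contDiffAt.comp r (by fun_prop)))

lemma contDiffAt_repulsionForce (hr : 0 < r) : ContDiffAt ℝ ∞ (repulsionForce s) r := by
  have hin : ContDiffAt ℝ ∞ (fun t : ℝ => 4 * t - 7) r := by fun_prop
  have hcut : ContDiffAt ℝ ∞ (fun t => 1 - phi (4 * t - 7)) r :=
    contDiffAt_const.sub (contDiff_phi.contDiffAt.comp r hin)
  have hbump : ContDiffAt ℝ ∞ (fun t => psi (4 * t - 7) / psiMass) r :=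
    (contDiff_psi.contDiffAt.comp r hin).div_const _
  exact ((contDiffAt_const.mul (contDiffAt_rpow_const_of_ne hr.ne')).mul hcut).add
    ((contDiffAt_const.mul (contDiffAt_rpow_const_of_ne hr.ne')).mul hbump)

lemma repulsionForce_nonneg (hs : 0 ≤ s) (hr : 0 < r) : 0 ≤ repulsionForce s r := by
  have hcut : 0 ≤ 1 - phi (4 * r - 7) := sub_nonneg.2 (phi_le_one _)
  have hbump : 0 ≤ psi (4 * r - 7) / psiMass := div_nonneg (psi_nonneg _) psiMass_pos.le
  unfold repulsionForce
  positivity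

lemma repulsionForce_pos (hs : 0 < s) (h0 : 0 < r) (h2 : r < 2) : 0 < repulsionForce s r := by
  have hcut : 0 < 1 - phi (4 * r - 7) := sub_pos.2 (phi_lt_one (by linarith))
  have hbump : 0 ≤ psi (4 * r - 7) / psiMass := div_nonneg (psi_nonneg _) psiMass_pos.le
  unfold repulsionForce
  positivity

lemma repulsionForce_eq_zero (hr : 2 ≤ r) : repulsionForce s r = 0 := by
  rw [repulsionForce, phi_eq_one (by linarith),
    psi_eq_zero (by rw [abs_of_nonneg (by linarith)]; linarith)]
  simp

lemma antitoneOn_repulsionForce (hs : 0 ≤ s) : AntitoneOn (repulsionForce s) (Ici (7 / 4)) := by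
  intro x hx y _ hxy
  rw [mem_Ici] at hx
  have hx0 : 0 < x := by linarith
  have hpow₁ : y ^ (-s - 1) ≤ x ^ (-s - 1) := rpow_le_rpow_of_nonpos hx0 hxy (by linarith)
  have hpow₂ : y ^ (-s) ≤ x ^ (-s) := rpow_le_rpow_of_nonpos hx0 hxy (by linarith)
  have hphi : 1 - phi (4 * y - 7) ≤ 1 - phi (4 * x - 7) :=
    sub_le_sub_left (monotone_phi (by linarith)) 1
  have hpsi : psi (4 * y - 7) / psiMass ≤ psi (4 * x - 7) / psiMass :=
    div_le_div_of_nonneg_right (antitoneOn_psi (mem_Ici.2 (by linarith))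
      (mem_Ici.2 (by linarith)) (by linarith)) psiMass_pos.le
  have hcut : 0 ≤ 1 - phi (4 * y - 7) := sub_nonneg.2 (phi_le_one _)
  have hbump : 0 ≤ psi (4 * y - 7) / psiMass := div_nonneg (psi_nonneg _) psiMass_pos.le
  unfold repulsionForce
  gcongr s * ?_ * ?_ + 4 * ?_ * ?_

/-- On `[1, 7/4]` the force is positive and smooth, beyond `7/4` it decreases. -/
lemma exists_repulsionForce_le_mul_exp (hs : 0 < s) : ∃ L ≥ 0, ∀ x y, 1 ≤ x → x ≤ y →
    repulsionForce s y ≤ repulsionForce s x * exp (L * (y - x)) := by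
  obtain ⟨L, hL0, hL⟩ := ContDiffOn.exists_le_mul_exp_of_pos (a := 1) (b := 7 / 4)
    (fun r hr => ((contDiffAt_repulsionForce (s := s) (by linarith [hr.1])).of_le
      (by norm_num)).contDiffWithinAt)
    fun r hr => repulsionForce_pos hs (by linarith [hr.1]) (by linarith [hr.2])
  have hanti := antitoneOn_repulsionForce hs.le
  refine ⟨L, hL0, fun x y hx hxy => ?_⟩
  have hgx := repulsionForce_nonneg hs.le (show 0 < x by linarith)
  rcases le_or_gt (7 / 4) x with h74x | hx74
  · calc repulsionForce s y ≤ repulsionForce s x := hanti h74x (h74x.trans hxy) hxy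
      _ ≤ repulsionForce s x * exp (L * (y - x)) :=
        le_mul_of_one_le_right hgx (one_le_exp (by nlinarith))
  rcases le_or_gt y (7 / 4) with hy74 | h74y
  · exact hL x ⟨hx, hx74.le⟩ y ⟨hx.trans hxy, hy74⟩ hxy
  calc repulsionForce s y ≤ repulsionForce s (7 / 4) :=
        hanti (le_refl (7 / 4 : ℝ)) h74y.le h74y.le
    _ ≤ repulsionForce s x * exp (L * (7 / 4 - x)) :=
      hL x ⟨hx, hx74.le⟩ (7 / 4) ⟨by norm_num, le_rfl⟩ hx74.le
    _ ≤ repulsionForce s x * exp (L * (y - x)) := by gcongr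

end Repulsion

section Attraction

variable {ε β r : ℝ}

def w2Inner (ε β r : ℝ) : ℝ := -phi ((r - (1 - ε + β / 2)) / (β / 2))

def w2Outer (ε β r : ℝ) : ℝ := -1 + phi (r - (2 + ε - β)) / phi (-1 + β)

def attractionForce (ε β r : ℝ) : ℝ := psi (r - (2 + ε - β)) / psiMass / phi (-1 + β)

lemma w2_eq_w2Inner (hβ : 0 < β) (hr : r < 1 + ε - β) : w2 ε β r = w2Inner ε β r := by
  have hβ2 : 0 < β / 2 := by linarith
  unfold w2 w2Inner
  split_ifs
  · rw [phi_eq_zero (by rw [div_le_iff₀ hβ2]; linarith), neg_zero]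
  · rfl
  · rw [phi_eq_one (by rw [le_div_iff₀ hβ2]; linarith)]
  all_goals linarith

lemma w2_eq_w2Outer (hβ : 0 < β) (hr : 1 - ε + β < r) : w2 ε β r = w2Outer ε β r := by
  unfold w2 w2Outer
  split_ifs
  · linarith
  · linarith
  · rw [phi_eq_zero (by linarith), zero_div, add_zero]
  · rfl
  · rw [phi_eq_one (x := r - (2 + ε - β)) (by linarith)]

lemma antitone_w2Inner (hβ : 0 < β) : Antitone (w2Inner ε β) := fun x y hxy =>
  neg_le_neg (monotone_phi (div_le_div_of_nonneg_right (by linarith) (by linarith)))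

lemma hasDerivAt_w2Outer : HasDerivAt (w2Outer ε β) (attractionForce ε β r) r := by
  have hshift := (hasDerivAt_phi _).comp r ((hasDerivAt_id r).sub_const (2 + ε - β))
  unfold w2Outer attractionForce
  simpa using (hshift.div_const (phi (-1 + β))).const_add (-1)

lemma attractionForce_nonneg : 0 ≤ attractionForce ε β r :=
  div_nonneg (div_nonneg (psi_nonneg _) psiMass_pos.le) (phi_nonneg _)

lemma attractionForce_eq_zero (hr : r ≤ 1 + ε - β) : attractionForce ε β r = 0 := by
  rw [attractionForce, psi_eq_zero (by rw [abs_of_neg (by linarith)]; linarith)]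
  simp

lemma attractionForce_mul_exp_le (hβ : β ≤ 1 / 2) {x y : ℝ} (hx : 1 + ε - β < x) (hxy : x ≤ y)
    (hy : y ≤ 1 + ε) :
    attractionForce ε β x * exp ((y - x) / (4 * β ^ 2)) ≤ attractionForce ε β y := by
  have hgrowth := psi_mul_exp_le hβ (show -1 < x - (2 + ε - β) by linarith)
    (sub_le_sub_right hxy _) (show y - (2 + ε - β) ≤ -1 + β by linarith)
  rw [show y - (2 + ε - β) - (x - (2 + ε - β)) = y - x by ring] at hgrowth
  have hphi : 0 < phi (-1 + β) := phi_pos (by linarith)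
  unfold attractionForce
  rw [div_div, div_div, div_mul_eq_mul_div]
  exact div_le_div_of_nonneg_right hgrowth (mul_pos psiMass_pos hphi).le

lemma inv_le_attractionForce (hβ0 : 0 < β) (hβ1 : β ≤ 1) (h1 : 1 + ε ≤ r)
    (h2 : r ≤ 2 + ε - β) :
    β⁻¹ ≤ attractionForce ε β r := by
  have hphi : 0 < phi (-1 + β) := phi_pos (by linarith)
  have hpsi : 0 < psi (-1 + β) := psi_pos (abs_lt.2 ⟨by linarith, by linarith⟩)
  have hmono : psi (-1 + β) ≤ psi (r - (2 + ε - β)) :=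
    monotoneOn_psi (mem_Iic.2 (by linarith)) (mem_Iic.2 (by linarith)) (by linarith)
  calc β⁻¹ = psi (-1 + β) / psiMass / (β * (psi (-1 + β) / psiMass)) := by
        field_simp [psiMass_pos.ne']
    _ ≤ psi (-1 + β) / psiMass / phi (-1 + β) :=
        div_le_div_of_nonneg_left (by positivity [psiMass_pos]) hphi
          (phi_neg_one_add_le hβ0.le hβ1)
    _ ≤ attractionForce ε β r := by
        unfold attractionForce
        gcongr
        exact psiMass_pos.le

end Attraction

section Profile

variable {α β ε s r : ℝ}

lemma wprof_eq_add : wprof α β ε s r = α * repulsion s r + w2 ε β r := by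
  rw [wprof, repulsion, mul_assoc]

lemma wprof_eventuallyEq_inner (hβ : 0 < β) (hr : r < 1 + ε - β) :
    wprof α β ε s =ᶠ[𝓝 r] fun t => α * repulsion s t + w2Inner ε β t :=
  eventually_of_mem (Iio_mem_nhds hr) fun t ht => by rw [wprof_eq_add, w2_eq_w2Inner hβ ht]

lemma wprof_eventuallyEq_outer (hβ : 0 < β) (hr : 1 - ε + β < r) :
    wprof α β ε s =ᶠ[𝓝 r] fun t => α * repulsion s t + w2Outer ε β t :=
  eventually_of_mem (Ioi_mem_nhds hr) fun t ht => by rw [wprof_eq_add, w2_eq_w2Outer hβ ht]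

lemma contDiffAt_wprof (hβ : 0 < β) (hβε : β < ε) (hr : 0 < r) :
    ContDiffAt ℝ ∞ (wprof α β ε s) r := by
  have hrep : ContDiffAt ℝ ∞ (fun t => α * repulsion s t) r :=
    contDiffAt_const.mul (contDiffAt_repulsion hr)
  rcases lt_or_ge r (1 + ε - β) with h | h
  · have hinner : ContDiff ℝ ∞ (w2Inner ε β) := (contDiff_phi.comp (by fun_prop)).neg
    exact (hrep.add hinner.contDiffAt).congr_of_eventuallyEq (wprof_eventuallyEq_inner hβ h)
  · have houter : ContDiff ℝ ∞ (w2Outer ε β) :=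
      contDiff_const.add ((contDiff_phi.comp (by fun_prop)).div_const _)
    exact (hrep.add houter.contDiffAt).congr_of_eventuallyEq
      (wprof_eventuallyEq_outer hβ (by linarith))

lemma deriv_wprof_le (hβ : 0 < β) (h0 : 0 < r) (hr : r < 1 + ε - β) :
    deriv (wprof α β ε s) r ≤ -(α * repulsionForce s r) := by
  have hinner : HasDerivAt (w2Inner ε β) (deriv (w2Inner ε β) r) r :=
    ((contDiff_phi.comp (by fun_prop)).neg.differentiable (by simp)).differentiableAt.hasDerivAt
  rw [((((hasDerivAt_repulsion h0).const_mul α).add hinner).congr_of_eventuallyEq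
    (wprof_eventuallyEq_inner hβ hr)).deriv]
  linarith [(antitone_w2Inner (ε := ε) hβ).deriv_nonpos (x := r)]

lemma deriv_wprof_eq (hβ : 0 < β) (h0 : 0 < r) (hr : 1 - ε + β < r) :
    deriv (wprof α β ε s) r = -(α * repulsionForce s r) + attractionForce ε β r := by
  rw [((((hasDerivAt_repulsion h0).const_mul α).add hasDerivAt_w2Outer).congr_of_eventuallyEq
    (wprof_eventuallyEq_outer hβ hr)).deriv]
  ring

lemma deriv_wprof_neg (hs : 0 < s) (hα : 0 < α) (hβ : 0 < β) (hβε : β < ε) (h0 : 0 < r)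
    (hr : r ≤ 1 + ε - β) (h2 : r < 2) : deriv (wprof α β ε s) r < 0 := by
  have hrep := mul_pos hα (repulsionForce_pos hs h0 h2)
  rcases hr.lt_or_eq with h | rfl
  · linarith [deriv_wprof_le (s := s) (α := α) hβ h0 h]
  · rw [deriv_wprof_eq hβ h0 (by linarith), attractionForce_eq_zero le_rfl]
    linarith

lemma deriv_wprof_nonneg_of_two_le (hβ : 0 < β) (hβε : β < ε) (hr : 2 ≤ r) :
    0 ≤ deriv (wprof α β ε s) r := by
  rw [deriv_wprof_eq hβ (by linarith) (by linarith), repulsionForce_eq_zero hr, mul_zero,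
    neg_zero, zero_add]
  exact attractionForce_nonneg

lemma repulsionForce_le_attractionForce_of_le {C L : ℝ} (hs : 0 ≤ s) (hα0 : 0 ≤ α)
    (hα1 : α ≤ 1) (hβ0 : 0 < β) (hβ : β ≤ 1 / 2) (hβε : β < ε)
    (hC : ∀ r ∈ Icc (1 : ℝ) 2, repulsionForce s r ≤ C) (hCβ : C ≤ β⁻¹)
    (hL : ∀ x y, 1 ≤ x → x ≤ y → repulsionForce s y ≤ repulsionForce s x * exp (L * (y - x)))
    (hLβ : L * (4 * β ^ 2) ≤ 1) {x y : ℝ} (hx : 1 + ε - β < x) (hxy : x ≤ y) (hy : y < 2)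
    (hdom : α * repulsionForce s x ≤ attractionForce ε β x) :
    α * repulsionForce s y ≤ attractionForce ε β y := by
  have hgy := repulsionForce_nonneg hs (show 0 < y by linarith)
  rcases le_or_gt (1 + ε) y with hy' | hy'
  · calc α * repulsionForce s y ≤ repulsionForce s y := mul_le_of_le_one_left hgy hα1
      _ ≤ β⁻¹ := (hC y ⟨by linarith, hy.le⟩).trans hCβ
      _ ≤ attractionForce ε β y := inv_le_attractionForce hβ0 (by linarith) hy' (by linarith)
  have hrate : L * (y - x) ≤ (y - x) / (4 * β ^ 2) := by
    rw [le_div_iff₀ (by positivity)]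
    nlinarith [sub_nonneg.2 hxy]
  have hgx := repulsionForce_nonneg hs (show 0 < x by linarith)
  calc α * repulsionForce s y ≤ α * repulsionForce s x * exp (L * (y - x)) := by
        rw [mul_assoc]; exact mul_le_mul_of_nonneg_left (hL x y (by linarith) hxy) hα0
    _ ≤ α * repulsionForce s x * exp ((y - x) / (4 * β ^ 2)) := by gcongr
    _ ≤ attractionForce ε β x * exp ((y - x) / (4 * β ^ 2)) := by gcongr
    _ ≤ attractionForce ε β y := attractionForce_mul_exp_le hβ hx hxy hy'.le

end Profile

theorem constructed_potential_properties_general (d : ℕ) (hd : 2 ≤ d)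
    (ε : ℝ)
    (s : ℝ) (hs1 : (d : ℝ) - 2 < s) :
    ∃ α₀ > (0 : ℝ), ∃ β₀ > (0 : ℝ), ∀ α β : ℝ,
      0 < α → α < α₀ → 0 < β → β < β₀ → β < ε →
      (∀ n : ℕ, ContDiffOn ℝ n
        (fun x : EuclideanSpace ℝ (Fin d) => wprof α β ε s ‖x‖)
        {(0 : EuclideanSpace ℝ (Fin d))}ᶜ) ∧
      ∃ r₀ > (0 : ℝ),
        (∀ r : ℝ, 0 < r → r < r₀ → deriv (wprof α β ε s) r < 0) ∧
        (∀ r : ℝ, r₀ < r → 0 ≤ deriv (wprof α β ε s) r) := by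
  have hs : 0 < s := by
    have : (2 : ℝ) ≤ d := by exact_mod_cast hd
    linarith
  obtain ⟨C, hC⟩ := (isCompact_Icc (a := (1 : ℝ)) (b := 2)).bddAbove_image
    (f := repulsionForce s) fun r hr =>
      (contDiffAt_repulsionForce (by linarith [hr.1])).continuousAt.continuousWithinAt
  have hC0 : 0 ≤ C := (repulsionForce_nonneg hs.le one_pos).trans (hC ⟨1, by norm_num, rfl⟩)
  obtain ⟨L, hL0, hL⟩ := exists_repulsionForce_le_mul_exp hs
  refine ⟨1, one_pos, min (1 / 2) (C + 4 * L + 1)⁻¹, by positivity,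
    fun α β hα0 hα1 hβ0 hββ₀ hβε => ⟨fun n x hx => ?_, ?_⟩⟩
  · exact (((contDiffAt_wprof hβ0 hβε (norm_pos_iff.2 hx)).of_le (by exact_mod_cast le_top)).comp
      x (contDiffAt_norm ℝ hx)).contDiffWithinAt
  have hβ : β ≤ 1 / 2 := hββ₀.le.trans (min_le_left _ _)
  have hβCL : (C + 4 * L + 1) * β < 1 :=
    (lt_inv_mul_iff₀ (by positivity)).1
      (by rw [mul_one]; exact hββ₀.trans_le (min_le_right _ _))
  have hCβ : C ≤ β⁻¹ := by
    rw [← one_div, le_div_iff₀ hβ0]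
    nlinarith
  have hLβ : L * (4 * β ^ 2) ≤ 1 := by nlinarith
  refine exists_sign_change_threshold one_pos
    (fun r h0 h1 => deriv_wprof_neg hs hα0 hβ0 hβε h0 (by linarith) (by linarith)) two_pos
    (deriv_wprof_nonneg_of_two_le hβ0 hβε le_rfl) fun x y hx hxy hDx => ?_
  rcases le_or_gt 2 y with hy | hy
  · exact deriv_wprof_nonneg_of_two_le hβ0 hβε hy
  have hxa : 1 + ε - β < x := lt_of_not_ge fun hxa =>
    (deriv_wprof_neg hs hα0 hβ0 hβε hx hxa (by linarith)).not_ge hDx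
  rw [deriv_wprof_eq hβ0 hx (by linarith)] at hDx
  rw [deriv_wprof_eq hβ0 (by linarith) (by linarith)]
  have := repulsionForce_le_attractionForce_of_le hs.le hα0.le hα1.le hβ0 hβ hβε
    (fun r hr => hC ⟨r, hr, rfl⟩) hCβ hL hLβ hxa hxy hy (by linarith)
  linarith

/-- For sufficiently small `α, β > 0` (with `β < ε`), the constructed potential
`W(x) = w(|x|)` with `w(r) = α r^{-s}(1 - φ(4r-7)) + w₂(r)` is smooth away from the origin,
repulsive at short distance and attractive at long distance. -/
theorem constructed_potential_properties (d : ℕ) (hd : 2 ≤ d) (ε₀ : ℝ)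
    (hε₀ : ε₀ = if d = 2 then (5 * Real.pi / (44 * Real.sqrt 2))^2
      else ((d : ℝ) - 1) * sphereArea (d-1) / (32 * d * sphereArea (d-2)))
    (ε : ℝ) (hε0 : 0 < ε) (hε : ε < ε₀)
    (s : ℝ) (hs1 : (d : ℝ) - 2 < s) (hs2 : s < d) :
    ∃ α₀ > (0 : ℝ), ∃ β₀ > (0 : ℝ), ∀ α β : ℝ,
      0 < α → α < α₀ → 0 < β → β < β₀ → β < ε →
      (∀ n : ℕ, ContDiffOn ℝ n
        (fun x : EuclideanSpace ℝ (Fin d) => wprof α β ε s ‖x‖)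
        {(0 : EuclideanSpace ℝ (Fin d))}ᶜ) ∧
      ∃ r₀ > (0 : ℝ),
        (∀ r : ℝ, 0 < r → r < r₀ → deriv (wprof α β ε s) r < 0) ∧
        (∀ r : ℝ, r₀ < r → 0 ≤ deriv (wprof α β ε s) r) :=
  constructed_potential_properties_general d hd ε s hs1
end
end
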